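/- arXiv:0903.1189 — 5 statements merged into one kernel-verified Lean document; each statement's English description precedes it below -/
import Mathlib

section
/- Let G be a group, Δ a G-set, and A ↪ B ↠ C a short exact sequence of G-modules. Then the sequence splits as a sequence of G_δ-modules for every δ ∈ Δ if and only if the sequence A ⊗ ℤΔ ↪ B ⊗ ℤΔ ↠ C ⊗ ℤΔ (with diagonal G-action) splits as a sequence of G-modules. -/
/-!
Choose a representative of each `G`-orbit of `Δ` and transport the `G_δ`-equivariant section
chosen there along the orbit by conjugation, `s_{gδ} = g ∘ s_δ ∘ g⁻¹`; stabilizer-equivariance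
makes the resulting family satisfy `s_{gδ} ∘ g = g ∘ s_δ` for all `g` and `δ`. Then
`c ⊗ δ ↦ s_δ c ⊗ δ` is a `G`-equivariant section of `π ⊗ ℤΔ`. Conversely, for a `G`-equivariant
section `S`, the `δ`-coordinate of `S (c ⊗ δ)` is a `G_δ`-equivariant section of `π`.
-/

open TensorProduct

/-- The permutation representation on `H →₀ k`, as `Representation.ofMulAction` was defined
in the older Mathlib (before `MonoidAlgebra` became a structure distinct from `Finsupp`). -/
noncomputable def ofMulActionFinsupp (k G H : Type*) [CommSemiring k] [Monoid G] [MulAction G H] :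
    Representation k G (H →₀ k) where
  toFun g := Finsupp.lmapDomain k k (g • ·)
  map_one' := by ext x y; simp
  map_mul' x y := by ext z w; simp [mul_smul]

theorem ofMulActionFinsupp_single {k G H : Type*} [CommSemiring k] [Monoid G] [MulAction G H]
    (g : G) (x : H) (r : k) :
    ofMulActionFinsupp k G H g (Finsupp.single x r) = Finsupp.single (g • x) r :=
  Finsupp.mapDomain_single

theorem ofMulActionFinsupp_apply {k G H : Type*} [CommSemiring k] [Group G] [MulAction G H]
    (g : G) (f : H →₀ k) (x : H) :
    ofMulActionFinsupp k G H g f x = f (g⁻¹ • x) := by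
  conv_lhs => rw [← smul_inv_smul g x]
  exact Finsupp.mapDomain_apply (MulAction.injective g) f _

namespace MulAction

variable {G Δ X : Type*} [Group G] [MulAction G Δ] [MulAction G X]

theorem exists_mulActionHom_of_stabilizer_smul_eq (x : Δ → X)
    (hx : ∀ δ, ∀ g ∈ stabilizer G δ, g • x δ = x δ) :
    ∃ f : Δ →[G] X, ∀ δ, ∃ g : G, f δ = g • x (g⁻¹ • δ) := by
  let r : Δ → Δ := fun δ => (Quotient.mk (orbitRel G Δ) δ).out
  have hr : ∀ (g : G) δ, r (g • δ) = r δ := fun g δ => by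
    simp only [r, Quotient.sound (orbitRel_apply.mpr (mem_orbit δ g))]
  have hγ : ∀ δ, ∃ g : G, g • r δ = δ := fun δ =>
    (orbitRel G Δ).symm (Quotient.exact (Quotient.out_eq (Quotient.mk (orbitRel G Δ) δ)))
  choose γ hγ using hγ
  have hrγ : ∀ δ, (γ δ)⁻¹ • δ = r δ := fun δ => inv_smul_eq_iff.mpr (hγ δ).symm
  refine ⟨⟨fun δ => γ δ • x (r δ), fun g δ => ?_⟩, fun δ => ⟨γ δ, by rw [hrγ]; rfl⟩⟩
  have hmem : (γ (g • δ))⁻¹ * g * γ δ ∈ stabilizer G (r δ) := by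
    rw [mem_stabilizer_iff, mul_smul, mul_smul, hγ, ← hr g δ, hrγ]
  calc γ (g • δ) • x (r (g • δ))
      = γ (g • δ) • ((γ (g • δ))⁻¹ * g * γ δ) • x (r δ) := by rw [hx _ _ hmem, hr]
    _ = g • γ δ • x (r δ) := by simp only [← mul_smul, mul_assoc, mul_inv_cancel_left]

end MulAction

section

open Finsupp

variable {k Δ B C : Type*} [CommSemiring k] [AddCommMonoid B] [Module k B] [AddCommMonoid C]
  [Module k C]

variable (k) in
noncomputable def tensorFinsuppDiag (t : Δ → C →ₗ[k] B) :
    C ⊗[k] (Δ →₀ k) →ₗ[k] B ⊗[k] (Δ →₀ k) :=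
  TensorProduct.lift (lsum k fun δ =>
    LinearMap.toSpanSingleton k _ ((mk k B (Δ →₀ k)).flip (single δ 1) ∘ₗ t δ)).flip

@[simp]
theorem tensorFinsuppDiag_tmul_single (t : Δ → C →ₗ[k] B) (c : C) (δ : Δ) :
    tensorFinsuppDiag k t (c ⊗ₜ single δ 1) = t δ c ⊗ₜ single δ 1 := by
  simp [tensorFinsuppDiag]

variable (k B) in
noncomputable def tensorFinsuppEval (δ : Δ) : B ⊗[k] (Δ →₀ k) →ₗ[k] B :=
  TensorProduct.rid k B ∘ₗ (lapply δ).lTensor B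

@[simp]
theorem tensorFinsuppEval_tmul (δ : Δ) (b : B) (f : Δ →₀ k) :
    tensorFinsuppEval k B δ (b ⊗ₜ f) = f δ • b := by
  simp [tensorFinsuppEval]

end

namespace Representation

open MulAction Finsupp

variable {k G Δ B C : Type*} [CommSemiring k] [Group G] [MulAction G Δ]
  [AddCommMonoid B] [Module k B] [AddCommMonoid C] [Module k C]
  {ρB : Representation k G B} {ρC : Representation k G C} {π : B →ₗ[k] C}

theorem exists_equivariant_sections_of_stabilizer
    (hπ : ∀ g : G, π ∘ₗ ρB g = ρC g ∘ₗ π) (s : Δ → C →ₗ[k] B)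
    (hs : ∀ δ, π ∘ₗ s δ = LinearMap.id)
    (hs_stab : ∀ δ, ∀ g ∈ stabilizer G δ, s δ ∘ₗ ρC g = ρB g ∘ₗ s δ) :
    ∃ t : Δ → C →ₗ[k] B, (∀ δ, π ∘ₗ t δ = LinearMap.id) ∧
      ∀ (g : G) δ, t (g • δ) ∘ₗ ρC g = ρB g ∘ₗ t δ := by
  let _ : MulAction G (C →ₗ[k] B) := MulAction.compHom _ (linHom ρC ρB)
  have hfixed : ∀ δ, ∀ g ∈ stabilizer G δ, g • s δ = s δ := fun δ g hg => by
    change ρB g ∘ₗ s δ ∘ₗ ρC g⁻¹ = s δ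
    ext c
    simpa using (LinearMap.congr_fun (hs_stab δ g hg) (ρC g⁻¹ c)).symm
  obtain ⟨t, ht⟩ := exists_mulActionHom_of_stabilizer_smul_eq s hfixed
  refine ⟨t, fun δ => ?_, fun g δ => ?_⟩
  · obtain ⟨g, hg⟩ := ht δ
    ext c
    rw [LinearMap.comp_apply, hg]
    change π (ρB g (s _ (ρC g⁻¹ c))) = c
    rw [← LinearMap.comp_apply π, hπ, LinearMap.comp_apply, ← LinearMap.comp_apply π, hs]
    simp
  · ext c
    rw [LinearMap.comp_apply, map_smul]
    change (ρB g ∘ₗ t δ ∘ₗ ρC g⁻¹) (ρC g c) = _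
    simp

theorem tprod_ofMulActionFinsupp_tmul_single (ρ : Representation k G C) (g : G) (c : C) (δ : Δ)
    (r : k) :
    ρ.tprod (ofMulActionFinsupp k G Δ) g (c ⊗ₜ single δ r) = ρ g c ⊗ₜ single (g • δ) r := by
  rw [tprod_apply, TensorProduct.map_tmul, ofMulActionFinsupp_single]

theorem tensorFinsuppEval_tprod_ofMulActionFinsupp (ρ : Representation k G C) (g : G)
    (x : C ⊗[k] (Δ →₀ k)) (δ : Δ) :
    tensorFinsuppEval k C δ (ρ.tprod (ofMulActionFinsupp k G Δ) g x) =
      ρ g (tensorFinsuppEval k C (g⁻¹ • δ) x) := by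
  induction x using TensorProduct.induction_on with
  | zero => simp only [map_zero]
  | add x y hx hy => simp only [map_add, hx, hy]
  | tmul c f =>
    rw [tprod_apply, TensorProduct.map_tmul, tensorFinsuppEval_tmul, tensorFinsuppEval_tmul,
      ofMulActionFinsupp_apply, map_smul (ρ g)]

theorem tensorFinsuppEval_rTensor (x : B ⊗[k] (Δ →₀ k)) (δ : Δ) :
    tensorFinsuppEval k C δ (π.rTensor _ x) = π (tensorFinsuppEval k B δ x) := by
  induction x using TensorProduct.induction_on with
  | zero => simp only [map_zero]
  | add x y hx hy => simp only [map_add, hx, hy]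
  | tmul b f => simp

theorem exists_tensor_section_of_equivariant_sections
    (t : Δ → C →ₗ[k] B) (ht : ∀ δ, π ∘ₗ t δ = LinearMap.id)
    (ht_equiv : ∀ (g : G) δ, t (g • δ) ∘ₗ ρC g = ρB g ∘ₗ t δ) :
    ∃ S : C ⊗[k] (Δ →₀ k) →ₗ[k] B ⊗[k] (Δ →₀ k), π.rTensor _ ∘ₗ S = LinearMap.id ∧
      ∀ g : G, S ∘ₗ ρC.tprod (ofMulActionFinsupp k G Δ) g =
        ρB.tprod (ofMulActionFinsupp k G Δ) g ∘ₗ S := by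
  refine ⟨tensorFinsuppDiag k t, ?_, fun g => ?_⟩
  · ext c δ
    simp [← LinearMap.comp_apply π, ht]
  · ext c δ
    simp only [AlgebraTensorModule.curry_apply, LinearMap.restrictScalars_self,
      TensorProduct.curry_apply, LinearMap.comp_apply, lsingle_apply,
      tprod_ofMulActionFinsupp_tmul_single, tensorFinsuppDiag_tmul_single]
    rw [← LinearMap.comp_apply (t (g • δ)), ht_equiv, LinearMap.comp_apply]

theorem exists_stabilizer_section_of_tensor_section (S : C ⊗[k] (Δ →₀ k) →ₗ[k] B ⊗[k] (Δ →₀ k))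
    (hS : π.rTensor _ ∘ₗ S = LinearMap.id)
    (hS_equiv : ∀ g : G, S ∘ₗ ρC.tprod (ofMulActionFinsupp k G Δ) g =
        ρB.tprod (ofMulActionFinsupp k G Δ) g ∘ₗ S) (δ : Δ) :
    ∃ s : C →ₗ[k] B, π ∘ₗ s = LinearMap.id ∧
      ∀ g ∈ stabilizer G δ, s ∘ₗ ρC g = ρB g ∘ₗ s := by
  refine ⟨tensorFinsuppEval k B δ ∘ₗ S ∘ₗ (TensorProduct.mk k C (Δ →₀ k)).flip (single δ 1),
    ?_, fun g hg => ?_⟩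
  · ext c
    simp [← tensorFinsuppEval_rTensor, ← LinearMap.comp_apply (π.rTensor _), hS]
  · ext c
    have hgδ : g • δ = δ := hg
    have hc : ρC g c ⊗ₜ single δ (1 : k) =
        ρC.tprod (ofMulActionFinsupp k G Δ) g (c ⊗ₜ single δ 1) := by
      rw [tprod_ofMulActionFinsupp_tmul_single, hgδ]
    simp only [LinearMap.comp_apply, LinearMap.flip_apply, TensorProduct.mk_apply, hc,
      ← LinearMap.comp_apply S, hS_equiv, tensorFinsuppEval_tprod_ofMulActionFinsupp,
      inv_smul_eq_iff.mpr hgδ.symm]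

theorem forall_exists_stabilizer_section_iff_exists_tensor_section
    (hπ : ∀ g : G, π ∘ₗ ρB g = ρC g ∘ₗ π) :
    (∀ δ : Δ, ∃ s : C →ₗ[k] B, π ∘ₗ s = LinearMap.id ∧
        ∀ g ∈ stabilizer G δ, s ∘ₗ ρC g = ρB g ∘ₗ s) ↔
    ∃ S : C ⊗[k] (Δ →₀ k) →ₗ[k] B ⊗[k] (Δ →₀ k), π.rTensor _ ∘ₗ S = LinearMap.id ∧
      ∀ g : G, S ∘ₗ ρC.tprod (ofMulActionFinsupp k G Δ) g =
        ρB.tprod (ofMulActionFinsupp k G Δ) g ∘ₗ S := by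
  refine ⟨fun h => ?_, fun ⟨S, hS, hS_equiv⟩ =>
    exists_stabilizer_section_of_tensor_section S hS hS_equiv⟩
  choose s hs hs_stab using h
  obtain ⟨t, ht, ht_equiv⟩ := exists_equivariant_sections_of_stabilizer hπ s hs hs_stab
  exact exists_tensor_section_of_equivariant_sections t ht ht_equiv

end Representation

theorem stmt10_general (G : Type) [Group G] (Δ : Type) [MulAction G Δ]
    (B C : Type) [AddCommGroup B] [AddCommGroup C]
    [Module ℤ B] [Module ℤ C]
    (ρB : Representation ℤ G B) (ρC : Representation ℤ G C)
    (π : B →ₗ[ℤ] C)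
    (hπe : ∀ g : G, π ∘ₗ ρB g = ρC g ∘ₗ π) :
    (∀ δ : Δ, ∃ s : C →ₗ[ℤ] B, π ∘ₗ s = LinearMap.id ∧
        ∀ g ∈ MulAction.stabilizer G δ, s ∘ₗ ρC g = ρB g ∘ₗ s) ↔
    (∃ S : @LinearMap ℤ ℤ _ _ (RingHom.id ℤ) (C ⊗[ℤ] (Δ →₀ ℤ)) (B ⊗[ℤ] (Δ →₀ ℤ)) _ _
          TensorProduct.instModule TensorProduct.instModule,
        (LinearMap.rTensor (Δ →₀ ℤ) π) ∘ₗ S = @LinearMap.id ℤ (C ⊗[ℤ] (Δ →₀ ℤ)) _ _ TensorProduct.instModule ∧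
        ∀ g : G, S ∘ₗ (ρC.tprod (ofMulActionFinsupp ℤ G Δ)) g
          = (ρB.tprod (ofMulActionFinsupp ℤ G Δ)) g ∘ₗ S) :=
  Representation.forall_exists_stabilizer_section_iff_exists_tensor_section hπe

/-- A short exact sequence `A ↪ B ↠ C` of `G`-modules splits over the stabilizer `G_δ`
for every `δ ∈ Δ` if and only if the tensored sequence
`A ⊗ ℤΔ ↪ B ⊗ ℤΔ ↠ C ⊗ ℤΔ` (diagonal `G`-action) splits `G`-equivariantly. -/
theorem stmt10 (G : Type) [Group G] (Δ : Type) [MulAction G Δ]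
    (A B C : Type) [AddCommGroup A] [AddCommGroup B] [AddCommGroup C]
    [Module ℤ A] [Module ℤ B] [Module ℤ C]
    (ρA : Representation ℤ G A) (ρB : Representation ℤ G B) (ρC : Representation ℤ G C)
    (ι : A →ₗ[ℤ] B) (π : B →ₗ[ℤ] C)
    (hι : Function.Injective ι) (hπ : Function.Surjective π)
    (hexact : Function.Exact ι π)
    (hιe : ∀ g : G, ι ∘ₗ ρA g = ρB g ∘ₗ ι)
    (hπe : ∀ g : G, π ∘ₗ ρB g = ρC g ∘ₗ π) :
    (∀ δ : Δ, ∃ s : C →ₗ[ℤ] B, π ∘ₗ s = LinearMap.id ∧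
        ∀ g ∈ MulAction.stabilizer G δ, s ∘ₗ ρC g = ρB g ∘ₗ s) ↔
    (∃ S : @LinearMap ℤ ℤ _ _ (RingHom.id ℤ) (C ⊗[ℤ] (Δ →₀ ℤ)) (B ⊗[ℤ] (Δ →₀ ℤ)) _ _
          TensorProduct.instModule TensorProduct.instModule,
        (LinearMap.rTensor (Δ →₀ ℤ) π) ∘ₗ S = @LinearMap.id ℤ (C ⊗[ℤ] (Δ →₀ ℤ)) _ _ TensorProduct.instModule ∧
        ∀ g : G, S ∘ₗ (ρC.tprod (ofMulActionFinsupp ℤ G Δ)) g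
          = (ρB.tprod (ofMulActionFinsupp ℤ G Δ)) g ∘ₗ S) :=
  stmt10_general G Δ B C ρB ρC π hπe
end

section
/- Let G be a group, P a finite p-subgroup of G, and Δ a finite G-set. Suppose there are G-module maps φ : ℤ[G/P] → ℤΔ and augmentations ε_f : ℤΔ → ℤ, ε_P : ℤ[G/P] → ℤ (sending each basis element to 1) with ε_f ∘ φ = ε_P. Then P stabilizes some point of Δ. -/
/-!
The coset `P ∈ G ⧸ P` is fixed by `P`, so its image `y = φ(P)` in `ℤΔ` is a `P`-invariant
function on `Δ`, constant on `P`-orbits. Summing orbit by orbit, `∑ y = Σ |O| · y(O)`; every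
orbit of the `p`-group `P` has `p`-power size, so if no orbit were a fixed point then `p` would
divide `∑ y = ε(φ(P)) = ε(P) = 1`.
-/

open MulAction Finsupp

theorem IsPGroup.dvd_sum_of_smul_invariant {p : ℕ} [Fact p.Prime] {P α : Type*} [Group P]
    (hP : IsPGroup p P) [MulAction P α] [Fintype α] (hα : ∀ a : α, a ∉ fixedPoints P α) {f : α → ℤ}
    (hf : ∀ (g : P) (a : α), f (g • a) = f a) : (p : ℤ) ∣ ∑ a, f a := by
  classical
  have sum_orbit (b : α) : ∑ x : orbit P b, f x = Fintype.card (orbit P b) • f b := by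
    rw [← Finset.card_univ, ← Finset.sum_const]
    refine Finset.sum_congr rfl fun ⟨x, hx⟩ _ => ?_
    obtain ⟨g, rfl⟩ := mem_orbit_iff.mp hx
    exact hf g b
  rw [Fintype.sum_equiv (selfEquivSigmaOrbits P α) f (fun s => f s.2) fun _ => rfl,
    Fintype.sum_sigma]
  refine Finset.dvd_sum fun ω _ => ?_
  rw [sum_orbit, nsmul_eq_mul]
  obtain ⟨n, hn⟩ := hP.card_orbit ω.out
  have hn0 : n ≠ 0 := by
    rintro rfl
    rw [pow_zero, Nat.card_eq_fintype_card] at hn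
    exact hα _ (mem_fixedPoints_iff_card_orbit_eq_one.mpr hn)
  rw [← Nat.card_eq_fintype_card, hn]
  exact Dvd.dvd.mul_right (by exact_mod_cast dvd_pow_self p hn0) _

section

variable {R G : Type*} [Semiring R] [Group G]

theorem Finsupp.apply_smul_of_lmapDomain_smul_eq {Δ : Type*} [MulAction G Δ] {g : G}
    {y : Δ →₀ R} (hy : lmapDomain R R (g • ·) y = y) (δ : Δ) : y (g • δ) = y δ := by
  conv_lhs => rw [← hy]
  exact mapDomain_apply (MulAction.injective g) y δ

theorem Finsupp.lmapDomain_smul_single_one_coset {P : Subgroup G} {g : G} (hg : g ∈ P) (r : R) :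
    lmapDomain R R (fun x : G ⧸ P => g • x) (single ((1 : G) : G ⧸ P) r)
      = single ((1 : G) : G ⧸ P) r := by
  rw [lmapDomain_apply, mapDomain_single]
  congr 1
  exact QuotientGroup.eq.mpr (by simpa using hg)

end

theorem stmt13_general (G : Type*) [Group G] (p : ℕ) (hp : p.Prime)
    (P : Subgroup G) (hP : IsPGroup p P)
    (Δ : Type*) [Fintype Δ] [MulAction G Δ]
    (φ : ((G ⧸ P) →₀ ℤ) →ₗ[ℤ] (Δ →₀ ℤ))
    (hφ : ∀ g : G, φ ∘ₗ Finsupp.lmapDomain ℤ ℤ (fun x : G ⧸ P => g • x)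
        = Finsupp.lmapDomain ℤ ℤ (fun x : Δ => g • x) ∘ₗ φ)
    (haug : ∀ x : (G ⧸ P) →₀ ℤ, (φ x).sum (fun _ n => n) = x.sum (fun _ n => n)) :
    ∃ δ : Δ, ∀ g ∈ P, g • δ = δ := by
  by_contra! hmoved
  have := Fact.mk hp
  set e : (G ⧸ P) →₀ ℤ := single ((1 : G) : G ⧸ P) 1
  have hinv (g : P) (δ : Δ) : φ e (g • δ) = φ e δ := by
    refine apply_smul_of_lmapDomain_smul_eq (g := (g : G)) ?_ δ
    rw [← LinearMap.comp_apply, ← hφ, LinearMap.comp_apply,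
      lmapDomain_smul_single_one_coset g.2]
  have hsum : ∑ δ, φ e δ = 1 := by
    have h := haug e
    rwa [sum_fintype _ _ fun _ => rfl, sum_single_index rfl] at h
  have hdvd := hP.dvd_sum_of_smul_invariant
    (fun δ hδ => by obtain ⟨g, hg, hgδ⟩ := hmoved δ; exact hgδ (hδ ⟨g, hg⟩)) hinv
  rw [hsum, Int.natCast_dvd_ofNat, Nat.dvd_one] at hdvd
  exact hp.ne_one hdvd

/-- Let `P` be a finite `p`-subgroup of `G` and `Δ` a finite `G`-set.  If there is a
`G`-equivariant map `φ : ℤ[G/P] → ℤΔ` commuting with the augmentations, then `P`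
stabilizes some point of `Δ`. -/
theorem stmt13 (G : Type*) [Group G] (p : ℕ) (hp : p.Prime)
    (P : Subgroup G) [Finite P] (hP : IsPGroup p P)
    (Δ : Type*) [Fintype Δ] [MulAction G Δ]
    (φ : ((G ⧸ P) →₀ ℤ) →ₗ[ℤ] (Δ →₀ ℤ))
    (hφ : ∀ g : G, φ ∘ₗ Finsupp.lmapDomain ℤ ℤ (fun x : G ⧸ P => g • x)
        = Finsupp.lmapDomain ℤ ℤ (fun x : Δ => g • x) ∘ₗ φ)
    (haug : ∀ x : (G ⧸ P) →₀ ℤ, (φ x).sum (fun _ n => n) = x.sum (fun _ n => n)) :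
    ∃ δ : Δ, ∀ g ∈ P, g • δ = δ :=
  stmt13_general G p hp P hP Δ φ hφ haug
end

section
/- A countable locally finite group G acts on a tree with finite vertex and edge stabilizers. Concretely: if G is the union of an ascending chain of finite subgroups G₁ ≤ G₂ ≤ ⋯, then the graph with vertex set and edge set both equal to the disjoint union ⊔_i G/G_i, where the edge gG_i joins vertices gG_i and gG_{i+1}, is a tree on which G acts with finite stabilizers. -/
/-!
Grade the vertices by their level `i`. Every edge joins consecutive levels, and by monotonicity
of the chain the only neighbour of `gG_i` one level up is `gG_{i+1}`; at a lowest vertex of a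
cycle both cycle edges would have to lead to that neighbour, so there are no cycles. Any two
vertices `gG_i`, `hG_j` are joined through `gG_k = hG_k` once `k ≥ i, j` and `g⁻¹h ∈ G_k`.
The stabilizer of `gG_i` is `gG_ig⁻¹`.
-/

variable {G : Type} [Group G] (Gs : ℕ → Subgroup G)

/-- The vertex set `⊔_i G/G_i` of the tree associated to an ascending chain of
subgroups `G_1 ≤ G_2 ≤ ⋯` of `G`. -/
def treeVertex : Type := Σ i : ℕ, G ⧸ Gs i

instance : MulAction G (treeVertex Gs) where
  smul g v := ⟨v.1, g • v.2⟩
  one_smul := fun ⟨i, x⟩ => congrArg (Sigma.mk i) (one_smul G x)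
  mul_smul := fun g h ⟨i, x⟩ => congrArg (Sigma.mk i) (mul_smul g h x)

/-- The graph on `⊔_i G/G_i` in which the edge indexed by `gG_i` joins the vertices
`gG_i ∈ G/G_i` and `gG_{i+1} ∈ G/G_{i+1}`. -/
def treeGraph : SimpleGraph (treeVertex Gs) where
  Adj v w :=
    (∃ g : G, w.1 = v.1 + 1 ∧ v.2 = (g : G ⧸ Gs v.1) ∧ w.2 = (g : G ⧸ Gs w.1)) ∨
    (∃ g : G, v.1 = w.1 + 1 ∧ w.2 = (g : G ⧸ Gs w.1) ∧ v.2 = (g : G ⧸ Gs v.1))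
  symm := by
    constructor
    rintro v w (⟨g, h1, h2, h3⟩ | ⟨g, h1, h2, h3⟩)
    · exact Or.inr ⟨g, h1, h2, h3⟩
    · exact Or.inl ⟨g, h1, h2, h3⟩
  loopless := by
    constructor
    rintro v (⟨g, h1, -⟩ | ⟨g, h1, -⟩) <;> exact Nat.succ_ne_self v.1 h1.symm

namespace SimpleGraph

variable {V : Type*} {Γ : SimpleGraph V}

theorem isAcyclic_of_unique_upper_neighbor (f : V → ℕ)
    (hadj : ∀ ⦃v w⦄, Γ.Adj v w → f w = f v + 1 ∨ f v = f w + 1)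
    (hup : ∀ ⦃v w w'⦄, Γ.Adj v w → Γ.Adj v w' → f w = f v + 1 → f w' = f v + 1 → w = w') :
    Γ.IsAcyclic := by
  classical
  intro v c hc
  obtain ⟨u, hu, hmin⟩ :=
    c.support.toFinset.exists_min_image f ⟨v, List.mem_toFinset.2 c.start_mem_support⟩
  rw [List.mem_toFinset] at hu
  have hc' := hc.rotate hu
  set c' := c.rotate u hu
  have hup_of_mem : ∀ x ∈ c'.support, Γ.Adj u x → f x = f u + 1 := fun x hx hux => by
    have := hmin x (List.mem_toFinset.2 ((Walk.mem_support_rotate_iff ..).1 hx))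
    have := hadj hux
    omega
  have hsnd := c'.adj_snd hc'.not_nil
  have hpen := (c'.adj_penultimate hc'.not_nil).symm
  exact hc'.snd_ne_penultimate <| hup hsnd hpen
    (hup_of_mem _ (c'.getVert_mem_support 1) hsnd) (hup_of_mem _ (c'.getVert_mem_support _) hpen)

end SimpleGraph

namespace treeGraph

theorem adj_smul (g : G) {v w : treeVertex Gs} :
    (treeGraph Gs).Adj v w → (treeGraph Gs).Adj (g • v) (g • w) := by
  rintro (⟨a, hvw, hv, hw⟩ | ⟨a, hvw, hw, hv⟩)
  · exact Or.inl ⟨g * a, hvw, congrArg (g • ·) hv, congrArg (g • ·) hw⟩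
  · exact Or.inr ⟨g * a, hvw, congrArg (g • ·) hw, congrArg (g • ·) hv⟩

theorem adj_succ (i : ℕ) (g : G) :
    (treeGraph Gs).Adj ⟨i, (g : G ⧸ Gs i)⟩ ⟨i + 1, (g : G ⧸ Gs (i + 1))⟩ :=
  Or.inl ⟨g, rfl, rfl, rfl⟩

theorem level_adj {v w : treeVertex Gs} (h : (treeGraph Gs).Adj v w) :
    w.1 = v.1 + 1 ∨ v.1 = w.1 + 1 := by
  rcases h with ⟨_, h, -⟩ | ⟨_, h, -⟩
  exacts [Or.inl h, Or.inr h]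

variable {Gs}

theorem eq_of_adj_of_level_eq_succ (hmono : Monotone Gs) {v w : treeVertex Gs}
    (hadj : (treeGraph Gs).Adj v w) (hlevel : w.1 = v.1 + 1) (g : G)
    (hg : v.2 = (g : G ⧸ Gs v.1)) : w = ⟨v.1 + 1, (g : G ⧸ Gs (v.1 + 1))⟩ := by
  obtain ⟨i, x⟩ := v
  obtain ⟨j, y⟩ := w
  dsimp only at hlevel hg
  subst hlevel hg
  rcases hadj with ⟨a, -, hga, hy⟩ | ⟨_, h, -⟩
  · have hmem : g⁻¹ * a ∈ Gs (i + 1) := hmono i.le_succ (QuotientGroup.eq.mp hga)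
    exact congrArg (Sigma.mk (i + 1)) (hy.trans (QuotientGroup.eq.mpr hmem).symm)
  · dsimp only at h
    omega

theorem isAcyclic (hmono : Monotone Gs) : (treeGraph Gs).IsAcyclic := by
  refine SimpleGraph.isAcyclic_of_unique_upper_neighbor Sigma.fst (fun _ _ => level_adj Gs) ?_
  intro v w w' hw hw' hlevel hlevel'
  obtain ⟨g, hg⟩ := QuotientGroup.mk_surjective v.2
  rw [eq_of_adj_of_level_eq_succ hmono hw hlevel g hg.symm,
    eq_of_adj_of_level_eq_succ hmono hw' hlevel' g hg.symm]

theorem reachable_of_le {i k : ℕ} (hik : i ≤ k) (g : G) :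
    (treeGraph Gs).Reachable ⟨i, (g : G ⧸ Gs i)⟩ ⟨k, (g : G ⧸ Gs k)⟩ := by
  induction k, hik using Nat.le_induction with
  | base => rfl
  | succ k _ ih => exact ih.trans (adj_succ Gs k g).reachable

theorem connected (hmono : Monotone Gs) (hunion : ∀ g : G, ∃ i, g ∈ Gs i) :
    (treeGraph Gs).Connected := by
  have : Nonempty (treeVertex Gs) := ⟨⟨0, ((1 : G) : G ⧸ Gs 0)⟩⟩
  refine ⟨fun ⟨i, x⟩ ⟨j, y⟩ => ?_⟩
  obtain ⟨g, rfl⟩ := QuotientGroup.mk_surjective x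
  obtain ⟨h, rfl⟩ := QuotientGroup.mk_surjective y
  obtain ⟨l, hl⟩ := hunion (g⁻¹ * h)
  have hgh : (g : G ⧸ Gs (max l (max i j))) = h :=
    QuotientGroup.eq.mpr (hmono (le_max_left _ _) hl)
  have hg := reachable_of_le (Gs := Gs) (le_max_left i j |>.trans (le_max_right l _)) g
  have hh := reachable_of_le (Gs := Gs) (le_max_right i j |>.trans (le_max_right l _)) h
  exact hg.trans (hgh ▸ hh.symm)

theorem stabilizer_eq (v : treeVertex Gs) :
    MulAction.stabilizer G v = MulAction.stabilizer G v.2 := by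
  obtain ⟨i, x⟩ := v
  ext g
  exact sigma_mk_injective.eq_iff

end treeGraph

theorem finite_stabilizer_quotient {H : Subgroup G} [Finite H] (x : G ⧸ H) :
    Finite (MulAction.stabilizer G x) := by
  obtain ⟨g, rfl⟩ := QuotientGroup.mk_surjective x
  have hx : (g : G ⧸ H) = g • (QuotientGroup.mk 1 : G ⧸ H) := by
    rw [MulAction.Quotient.smul_mk, smul_eq_mul, mul_one]
  have : Finite (MulAction.stabilizer G (QuotientGroup.mk 1 : G ⧸ H)) := by
    rwa [MulAction.stabilizer_quotient]
  exact Finite.of_equiv _ (MulAction.stabilizerEquivStabilizer hx).toEquiv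

/-- If a group `G` is the union of an ascending chain of finite subgroups
`G_1 ≤ G_2 ≤ ⋯`, then the graph with vertices and edges `⊔_i G/G_i`, where the edge
`gG_i` joins `gG_i` and `gG_{i+1}`, is a tree (connected and acyclic), `G` acts on it
by left multiplication, and all vertex stabilizers are finite. -/
theorem stmt16 (hmono : Monotone Gs) (hfin : ∀ i, Finite (Gs i))
    (hunion : ∀ g : G, ∃ i, g ∈ Gs i) :
    (treeGraph Gs).Connected ∧ (treeGraph Gs).IsAcyclic ∧
    (∀ (g : G) (v w : treeVertex Gs),
      (treeGraph Gs).Adj v w → (treeGraph Gs).Adj (g • v) (g • w)) ∧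
    (∀ v : treeVertex Gs, Finite (MulAction.stabilizer G v)) := by
  refine ⟨treeGraph.connected hmono hunion, treeGraph.isAcyclic hmono,
    fun g _ _ => treeGraph.adj_smul Gs g, fun v => ?_⟩
  have := hfin v.1
  rw [treeGraph.stabilizer_eq]
  exact finite_stabilizer_quotient v.2
end

section
/- Let G be a finite group and suppose the trivial G-module ℤ admits a resolution 0 → P_n → ⋯ → P_0 → ℤ → 0 of finite length by free ℤG-modules. Then G is trivial. -/
/-!
Let `g ∈ G` have order `n` and put `σ = g - 1`, `ν = 1 + g + ⋯ + g ^ (n - 1)` in `ℤG`.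
Keeping only the coefficients on a right transversal of `⟨g⟩` is an additive map `e` with
`∑ gⁱ e g⁻ⁱ = 1`, and such an `e` makes both `ℤG --ν--> ℤG --σ--> ℤG` and
`ℤG --σ--> ℤG --ν--> ℤG` exact; so are their analogues on free modules. Along a finite free
resolution these exactness properties pass from each image of a differential to the one below it,
starting from the zero modules at the top, and finally to `ℤ`. On `ℤ`, however, `σ` acts as `0`
and `ν` as `n`, so exactness there says `nℤ = ℤ`, i.e. `n = 1`.
-/

/-- The integers with the trivial action of `G`, as a module over the integral group
ring `ℤG`. -/
def TrivZMod (G : Type) [Group G] : Type := ℤ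

instance (G : Type) [Group G] : AddCommGroup (TrivZMod G) :=
  inferInstanceAs (AddCommGroup ℤ)

noncomputable instance (G : Type) [Group G] : Module (MonoidAlgebra ℤ G) (TrivZMod G) :=
  Module.compHom ℤ ((MonoidAlgebra.lift ℤ ℤ G) 1).toRingHom

open Finset

section

variable {A M : Type*} [Ring A] [AddCommGroup M] [Module A M]

-- As `lⁿ = 1`, `he` says that the conjugates `lⁱ e l⁻ⁱ` of `e` sum to the identity.
theorem exact_geomSum_smul_sub_one_smul {l : A} {n : ℕ} (hl : l ^ n = 1) (e : M →+ M)
    (he : ∀ m : M, ∑ i ∈ range n, l ^ i • e (l ^ (n - i) • m) = m) :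
    Function.Exact (fun m : M => (∑ i ∈ range n, l ^ i) • m) (fun m => (l - 1) • m) := by
  intro y
  constructor
  · intro hy
    have hly : l • y = y := by
      simpa only [sub_smul, one_smul, sub_eq_zero] using hy
    have hpow : ∀ k : ℕ, l ^ k • y = y := by
      intro k
      induction k with
      | zero => rw [pow_zero, one_smul]
      | succ k ih => rw [pow_succ, mul_smul, hly, ih]
    refine ⟨e y, ?_⟩
    conv_rhs => rw [← he y]
    simp only [hpow, sum_smul]
  · rintro ⟨x, rfl⟩
    simp only [smul_smul, mul_geom_sum, hl, sub_self, zero_smul]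

theorem exact_sub_one_smul_geomSum_smul {l : A} {n : ℕ} (hl : l ^ n = 1) (e : M →+ M)
    (he : ∀ m : M, ∑ i ∈ range n, l ^ i • e (l ^ (n - i) • m) = m) :
    Function.Exact (fun m : M => (l - 1) • m) (fun m => (∑ i ∈ range n, l ^ i) • m) := by
  intro y
  constructor
  · intro (hy : (∑ i ∈ range n, l ^ i) • y = 0)
    have hreflect : ∑ i ∈ range n, l ^ (n - i) = l * ∑ i ∈ range n, l ^ i := by
      rw [← sum_range_reflect, mul_sum]
      refine sum_congr rfl fun i hi => ?_
      rw [← pow_succ']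
      congr 1
      have := mem_range.mp hi
      omega
    have hsum : ∑ i ∈ range n, e (l ^ (n - i) • y) = 0 := by
      rw [← map_sum, ← sum_smul, hreflect, mul_smul, hy, smul_zero, map_zero]
    -- `y = ∑ lⁱ yᵢ` with `∑ yᵢ = 0`, and `lⁱ - 1 = (l - 1)(1 + ⋯ + lⁱ⁻¹)`.
    refine ⟨∑ i ∈ range n, (∑ k ∈ range i, l ^ k) • e (l ^ (n - i) • y), ?_⟩
    simp only [smul_sum, smul_smul, mul_geom_sum, sub_smul, one_smul, sum_sub_distrib, hsum,
      sub_zero]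
    exact he y
  · rintro ⟨x, rfl⟩
    simp only [smul_smul, geom_sum_mul, hl, sub_self, zero_smul]

end

section

variable {A : Type*} [Ring A] {s t : A}

theorem Function.Exact.smul_of_free {P : Type*} [AddCommGroup P] [Module A P] [Module.Free A P]
    (h : Function.Exact (fun a : A => t • a) (fun a : A => s • a)) :
    Function.Exact (fun m : P => t • m) (fun m : P => s • m) := by
  classical
  have hst : s * t = 0 := by simpa using h.apply_apply_eq_zero 1
  let b := Module.Free.chooseBasis A P
  intro m
  constructor
  · intro (hm : s • m = 0)
    have hcoord : ∀ i, ∃ c, t * c = b.repr m i := fun i =>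
      (h _).mp (by simpa using congr(b.repr $hm i))
    choose c hc using hcoord
    refine ⟨∑ i ∈ (b.repr m).support, c i • b i, ?_⟩
    conv_rhs => rw [← b.linearCombination_repr m, Finsupp.linearCombination_apply, Finsupp.sum]
    simp only [smul_sum, smul_smul, hc]
  · rintro ⟨v, rfl⟩
    simp only [smul_smul, hst, zero_smul]

theorem Function.Exact.smul_of_surjective {P Q : Type*} [AddCommGroup P] [Module A P]
    [AddCommGroup Q] [Module A Q] (hts : t * s = 0) {f : P →ₗ[A] Q} (hf : Function.Surjective f)
    (hP : Function.Exact (fun m : P => t • m) (fun m : P => s • m))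
    (hK : Function.Exact (fun m : LinearMap.ker f => s • m) (fun m => t • m)) :
    Function.Exact (fun m : Q => t • m) (fun m : Q => s • m) := by
  intro q
  obtain ⟨w, rfl⟩ := hf q
  constructor
  · intro (hw : s • f w = 0)
    obtain ⟨⟨z, hz⟩, hzw⟩ := (hK ⟨s • w, by rw [LinearMap.mem_ker, map_smul, hw]⟩).mp
      (Subtype.ext (by simp [smul_smul, hts]))
    obtain ⟨v, hv⟩ := (hP (w - z)).mp <| by
      simpa [smul_sub, sub_eq_zero] using congr_arg Subtype.val hzw.symm
    refine ⟨f v, ?_⟩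
    simp only [← map_smul, hv, map_sub, LinearMap.mem_ker.mp hz, sub_zero]
  · rintro ⟨v, hv⟩
    obtain ⟨u, rfl⟩ := hf v
    change t • f u = f w at hv
    change s • f w = 0
    rw [← hv, ← map_smul, ← map_smul, hP.apply_apply_eq_zero, map_zero]

theorem Function.Exact.smul_of_subsingleton {M : Type*} [AddCommGroup M] [Module A M]
    [Subsingleton M] : Function.Exact (fun m : M => t • m) (fun m : M => s • m) :=
  fun _ => ⟨fun _ => ⟨0, Subsingleton.elim _ _⟩, fun _ => Subsingleton.elim _ _⟩

open CategoryTheory in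
theorem Function.Exact.smul_of_finite_free_resolution
    (h₁ : Function.Exact (fun a : A => t • a) (fun a : A => s • a))
    (h₂ : Function.Exact (fun a : A => s • a) (fun a : A => t • a))
    {M : ModuleCat A} {n : ℕ} {P : ℕ → ModuleCat A}
    (d : ∀ i, P (i + 1) ⟶ P i) (ε : P 0 ⟶ M)
    (hP : ∀ i, Module.Free A (P i)) (hn : ∀ i, n < i → Subsingleton (P i))
    (hε : Function.Surjective ε) (h₀ : Function.Exact (d 0) ε)
    (hd : ∀ i, Function.Exact (d (i + 1)) (d i)) :
    Function.Exact (fun m : M => t • m) (fun m : M => s • m) := by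
  have hst : s * t = 0 := by simpa using h₁.apply_apply_eq_zero 1
  have hts : t * s = 0 := by simpa using h₂.apply_apply_eq_zero 1
  let B (i : ℕ) := LinearMap.range (d i).hom
  let Q (i : ℕ) := Function.Exact (fun m : B i => t • m) (fun m => s • m) ∧
      Function.Exact (fun m : B i => s • m) (fun m => t • m)
  have hB₀ : Q 0 := by
    refine Nat.decreasingInduction (motive := fun i _ => Q i) (fun i _ ih => ?_) ?_ n.zero_le
    · have hker : LinearMap.ker (d i).hom.rangeRestrict = B (i + 1) := by
        rw [LinearMap.ker_rangeRestrict, (hd i).linearMap_ker_eq]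
      have hsurj := (d i).hom.surjective_rangeRestrict
      exact ⟨.smul_of_surjective hts hsurj (.smul_of_free h₁) (hker ▸ ih.2),
        .smul_of_surjective hst hsurj (.smul_of_free h₂) (hker ▸ ih.1)⟩
    · have := hn (n + 1) n.lt_succ_self
      have := (d n).hom.surjective_rangeRestrict.subsingleton
      exact ⟨.smul_of_subsingleton, .smul_of_subsingleton⟩
  have hker : LinearMap.ker ε.hom = B 0 := h₀.linearMap_ker_eq
  exact .smul_of_surjective hts hε (.smul_of_free h₁) (hker ▸ hB₀.2)

end

theorem Subgroup.IsComplement.existsUnique_inv_pow_mul_mem {G : Type*} [Group G] {g : G}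
    (hg : IsOfFinOrder g) {T : Set G} (hT : IsComplement (zpowers g : Set G) T) (x : G) :
    ∃! i, i < orderOf g ∧ (g ^ i)⁻¹ * x ∈ T := by
  classical
  obtain ⟨⟨⟨h, hh⟩, ⟨t, ht⟩⟩, hx, huniq⟩ := hT.existsUnique x
  obtain ⟨i, hi, rfl⟩ := mem_image.mp (hg.mem_zpowers_iff_mem_range_orderOf.mp hh)
  refine ⟨i, ⟨mem_range.mp hi, by simpa [← hx] using ht⟩, fun j ⟨hj, hjT⟩ => ?_⟩
  have := huniq (⟨⟨g ^ j, j, zpow_natCast g j⟩, ⟨_, hjT⟩⟩) (mul_inv_cancel_left _ _)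
  exact pow_injOn_Iio_orderOf hj (mem_range.mp hi) (congr_arg (fun p => p.1.1) this)

namespace MonoidAlgebra

theorem single_one_pow_orderOf {k G : Type*} [Semiring k] [Monoid G] (g : G) :
    single g (1 : k) ^ orderOf g = 1 := by
  rw [single_pow, pow_orderOf_eq_one, one_pow, one_def]

theorem exists_addMonoidHom_sum_single_pow_smul {k G : Type*} [Ring k] [Group G] {g : G}
    (hg : IsOfFinOrder g) : ∃ e : k[G] →+ k[G], ∀ a : k[G],
      ∑ i ∈ range (orderOf g),
        single g (1 : k) ^ i • e (single g (1 : k) ^ (orderOf g - i) • a) = a := by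
  classical
  obtain ⟨T, hT, -⟩ := Subgroup.exists_isComplement_right (Subgroup.zpowers g) 1
  refine ⟨coeffAddEquiv.symm.toAddMonoidHom.comp
    ((Finsupp.filterAddHom (· ∈ T)).comp coeffAddEquiv.toAddMonoidHom), fun a => ?_⟩
  ext x
  have hinv : ∀ i < orderOf g, (g ^ (orderOf g - i))⁻¹ * ((g ^ i)⁻¹ * x) = x := by
    intro i hi
    rw [← mul_assoc, ← mul_inv_rev, ← pow_add, Nat.add_sub_cancel' hi.le, pow_orderOf_eq_one,
      inv_one, one_mul]
  obtain ⟨i₀, ⟨hi₀, hi₀T⟩, huniq⟩ := hT.existsUnique_inv_pow_mul_mem hg x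
  simp only [single_pow, one_pow, smul_eq_mul, coeff_sum, Finsupp.finsetSum_apply,
    coeff_single_mul_apply, one_mul]
  simp only [AddMonoidHom.comp_apply, AddEquiv.coe_toAddMonoidHom, coeffAddEquiv_apply,
    coeffAddEquiv_symm_apply, coeff_ofCoeff, Finsupp.filterAddHom, AddMonoidHom.coe_mk,
    ZeroHom.coe_mk, Finsupp.filter_apply, coeff_single_mul_apply, one_mul]
  rw [sum_eq_single i₀
      (fun i hi hne => if_neg fun hiT => hne (huniq i ⟨mem_range.mp hi, hiT⟩))
      (fun h => absurd (mem_range.mpr hi₀) h), if_pos hi₀T, hinv i₀ hi₀]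

end MonoidAlgebra

theorem single_one_smul_trivZMod {G : Type} [Group G] (g : G) (m : TrivZMod G) :
    MonoidAlgebra.single g (1 : ℤ) • m = m := by
  change MonoidAlgebra.lift ℤ ℤ G 1 (MonoidAlgebra.single g 1) * (show ℤ from m) = m
  rw [MonoidAlgebra.lift_single, one_smul, MonoidHom.one_apply]
  exact one_mul _

theorem orderOf_eq_one_of_exact_trivZMod {G : Type} [Group G] (g : G)
    (h : Function.Exact
      (fun m : TrivZMod G =>
        (∑ i ∈ range (orderOf g), MonoidAlgebra.single g (1 : ℤ) ^ i) • m)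
      (fun m => (MonoidAlgebra.single g (1 : ℤ) - 1) • m)) :
    orderOf g = 1 := by
  obtain ⟨m, hm⟩ := (h (show TrivZMod G from (1 : ℤ))).mp <| by
    change (MonoidAlgebra.single g (1 : ℤ) - 1) • _ = _
    rw [sub_smul, one_smul, single_one_smul_trivZMod, sub_self]
  change (∑ i ∈ range (orderOf g), MonoidAlgebra.single g (1 : ℤ) ^ i) • m = (1 : ℤ) at hm
  simp only [sum_smul, MonoidAlgebra.single_pow, one_pow, single_one_smul_trivZMod, sum_const,
    card_range] at hm
  change orderOf g • (show ℤ from m) = 1 at hm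
  rw [nsmul_eq_mul] at hm
  exact_mod_cast Int.eq_one_of_mul_eq_one_right (Int.natCast_nonneg _) hm

/-- If the trivial module `ℤ` over the integral group ring of a finite group `G` admits a
finite-length resolution by free `ℤG`-modules, then `G` is trivial. -/
theorem stmt17 (G : Type) [Group G] [Finite G]
    (h : ∃ (n : ℕ) (P : ℕ → ModuleCat (MonoidAlgebra ℤ G))
        (d : ∀ i : ℕ, P (i + 1) ⟶ P i)
        (ε : P 0 ⟶ ModuleCat.of (MonoidAlgebra ℤ G) (TrivZMod G)),
        (∀ i, Module.Free (MonoidAlgebra ℤ G) (P i)) ∧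
        (∀ i, n < i → Subsingleton (P i)) ∧
        Function.Surjective ε ∧
        Function.Exact (d 0) ε ∧
        (∀ i, Function.Exact (d (i + 1)) (d i))) :
    Subsingleton G := by
  obtain ⟨n, P, d, ε, hP, hn, hε, h₀, hd⟩ := h
  refine subsingleton_of_forall_eq 1 fun g => orderOf_eq_one_iff.mp ?_
  obtain ⟨e, he⟩ :=
    MonoidAlgebra.exists_addMonoidHom_sum_single_pow_smul (k := ℤ) (isOfFinOrder_of_finite g)
  have hl := MonoidAlgebra.single_one_pow_orderOf (k := ℤ) g
  exact orderOf_eq_one_of_exact_trivZMod g <| .smul_of_finite_free_resolution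
    (exact_geomSum_smul_sub_one_smul hl e he) (exact_sub_one_smul_geomSum_smul hl e he)
    d ε hP hn hε h₀ hd
end

section
/- Let G be a group and Δ a G-set such that for every subgroup H of G of prime power order, Δ^H ≠ ∅. Then for every finite subgroup K of G and every Δ-split surjection of G-modules π : A → B (meaning π splits G_δ-equivariantly for each δ ∈ Δ), π splits K-equivariantly. -/
/-!
Let `P` be a Sylow `p`-subgroup of `K`. Its image in `G` is a `p`-group, so it fixes some
`δ ∈ Δ`, and `π` has a `P`-equivariant section `s`. Summing the conjugates `k • s • k⁻¹` over
`k ∈ K ⧸ P` gives a `K`-equivariant map `t` with `π ∘ t = [K : P] • id`. The integers `n` for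
which `n • id` has such a `K`-equivariant lift form an ideal of `ℤ` containing, for every prime
`p`, the integer `[K : P]` prime to `p`; hence the ideal contains `1`.
-/

theorem Int.ideal_eq_top_of_forall_prime_exists_not_dvd (I : Ideal ℤ)
    (h : ∀ p : ℕ, p.Prime → ∃ n ∈ I, ¬ (p : ℤ) ∣ n) : I = ⊤ := by
  obtain ⟨d, rfl⟩ := (IsPrincipalIdealRing.principal I).principal
  rw [Ideal.submodule_span_eq, Ideal.span_singleton_eq_top, Int.isUnit_iff_natAbs_eq]
  by_contra hd
  obtain ⟨p, hp, hpd⟩ := Nat.exists_prime_and_dvd hd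
  obtain ⟨n, hn, hpn⟩ := h p hp
  exact hpn ((Int.natCast_dvd.mpr hpd).trans (Ideal.mem_span_singleton.mp hn))

section Transfer

variable {K A B : Type*} [Group K] [AddCommGroup A] [AddCommGroup B]
  [DistribMulAction K A] [DistribMulAction K B]

variable (A B) in
def conjSMul (k : K) : (B →+ A) →+ (B →+ A) where
  toFun s :=
    (DistribSMul.toAddMonoidHom A k).comp (s.comp (DistribSMul.toAddMonoidHom B k⁻¹))
  map_zero' := by ext; simp
  map_add' s t := by ext; simp

@[simp]
theorem conjSMul_apply (k : K) (s : B →+ A) (b : B) : conjSMul A B k s b = k • s (k⁻¹ • b) := rfl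

theorem conjSMul_mul (k l : K) (s : B →+ A) :
    conjSMul A B (k * l) s = conjSMul A B k (conjSMul A B l s) := by
  ext b; simp [mul_smul]

theorem conjSMul_eq_self_iff (k : K) (s : B →+ A) :
    conjSMul A B k s = s ↔ ∀ b, s (k • b) = k • s b := by
  refine ⟨fun h b => ?_, fun h => AddMonoidHom.ext fun b => ?_⟩
  · conv_lhs => rw [← h]
    simp
  · rw [conjSMul_apply, ← h, smul_inv_smul]

theorem conjSMul_mul_of_eq_self {k l : K} {s : B →+ A} (hl : conjSMul A B l s = s) :
    conjSMul A B (k * l) s = conjSMul A B k s := by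
  rw [conjSMul_mul, hl]

variable (K) in
def equivariantLiftIdeal (π : A →+ B) : Ideal ℤ where
  carrier := {n | ∃ t : B →+ A, (∀ b, π (t b) = n • b) ∧ ∀ (k : K) b, t (k • b) = k • t b}
  zero_mem' := ⟨0, by simp, by simp⟩
  add_mem' := by
    rintro m n ⟨s, hs, hsK⟩ ⟨t, ht, htK⟩
    exact ⟨s + t, by simp [hs, ht, add_zsmul], by simp [hsK, htK]⟩
  smul_mem' := by
    rintro c n ⟨t, ht, htK⟩
    exact ⟨c • t, by simp [ht, mul_zsmul], by simp [htK, smul_comm c]⟩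

theorem index_mem_equivariantLiftIdeal (π : A →+ B) (hπ : ∀ (k : K) x, π (k • x) = k • π x)
    (H : Subgroup K) [H.FiniteIndex] (s : B →+ A) (hs : ∀ b, π (s b) = b)
    (hsH : ∀ h ∈ H, ∀ b, s (h • b) = h • s b) :
    (H.index : ℤ) ∈ equivariantLiftIdeal K π := by
  have : Fintype (K ⧸ H) := Fintype.ofFinite _
  refine ⟨∑ c : K ⧸ H, conjSMul A B c.out s, fun b => ?_, fun k => ?_⟩
  · have hconj (k : K) : π (conjSMul A B k s b) = b := by simp [hπ, hs]
    simp only [AddMonoidHom.finsetSum_apply, map_sum, hconj, Finset.sum_const, Finset.card_univ]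
    rw [Subgroup.index_eq_card, Nat.card_eq_fintype_card, natCast_zsmul]
  · have hsH' (h : H) : conjSMul A B (h : K) s = s := (conjSMul_eq_self_iff _ s).mpr (hsH h h.2)
    -- `H`-equivariance of `s` makes `k • s • k⁻¹` depend only on the coset `k H`.
    have hout (g : K) : conjSMul A B (g : K ⧸ H).out s = conjSMul A B g s := by
      obtain ⟨h, hh⟩ := QuotientGroup.mk_out_eq_mul H g
      rw [hh, conjSMul_mul_of_eq_self (hsH' h)]
    rw [← conjSMul_eq_self_iff, map_sum]
    calc ∑ c : K ⧸ H, conjSMul A B k (conjSMul A B c.out s)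
        = ∑ c : K ⧸ H, conjSMul A B (k • c).out s := by
          refine Fintype.sum_congr _ _ fun c => ?_
          rw [← conjSMul_mul, ← hout]
          conv_rhs => rw [← QuotientGroup.out_eq' c, MulAction.Quotient.smul_mk, smul_eq_mul]
      _ = ∑ c : K ⧸ H, conjSMul A B c.out s :=
          Fintype.sum_equiv (MulAction.toPerm k) _ _ fun _ => rfl

theorem exists_equivariant_section_of_forall_prime (π : A →+ B)
    (hπ : ∀ (k : K) x, π (k • x) = k • π x)
    (hsplit : ∀ p : ℕ, p.Prime → ∃ H : Subgroup K, H.FiniteIndex ∧ ¬ p ∣ H.index ∧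
      ∃ s : B →+ A, (∀ b, π (s b) = b) ∧ ∀ h ∈ H, ∀ b, s (h • b) = h • s b) :
    ∃ t : B →+ A, (∀ b, π (t b) = b) ∧ ∀ (k : K) b, t (k • b) = k • t b := by
  have htop : equivariantLiftIdeal K π = ⊤ := by
    refine Int.ideal_eq_top_of_forall_prime_exists_not_dvd _ fun p hp => ?_
    obtain ⟨H, hH, hpH, s, hs, hsH⟩ := hsplit p hp
    exact ⟨H.index, index_mem_equivariantLiftIdeal π hπ H s hs hsH, by exact_mod_cast hpH⟩
  obtain ⟨t, ht, htK⟩ : (1 : ℤ) ∈ equivariantLiftIdeal K π := htop ▸ Submodule.mem_top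
  exact ⟨t, fun b => by rw [ht, one_zsmul], htK⟩

end Transfer

theorem stmt19_general (G : Type*) [Group G] (Δ : Type*) [MulAction G Δ]
    (hΔ : ∀ H : Subgroup G, (∃ (p k : ℕ), p.Prime ∧ Nat.card H = p ^ k) →
      ∃ δ : Δ, ∀ g ∈ H, g • δ = δ)
    (A B : Type*) [AddCommGroup A] [AddCommGroup B]
    [DistribMulAction G A] [DistribMulAction G B]
    (π : A →+ B)
    (hequiv : ∀ (g : G) (x : A), π (g • x) = g • π x)
    (hsplit : ∀ δ : Δ, ∃ s : B →+ A, (∀ b, π (s b) = b) ∧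
      ∀ g ∈ MulAction.stabilizer G δ, ∀ b, s (g • b) = g • s b)
    (K : Subgroup G) [Finite K] :
    ∃ s : B →+ A, (∀ b, π (s b) = b) ∧ ∀ g ∈ K, ∀ b, s (g • b) = g • s b := by
  refine (exists_equivariant_section_of_forall_prime (K := K) π (fun k x => hequiv k x)
    fun p hp => ?_).imp fun t ⟨ht, htK⟩ => ⟨ht, fun g hg => htK ⟨g, hg⟩⟩
  have := Fact.mk hp
  let P : Sylow p K := default
  obtain ⟨n, hn⟩ := P.2.exists_card_eq
  obtain ⟨δ, hδ⟩ := hΔ (P.map K.subtype)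
    ⟨p, n, hp, (Subgroup.card_map_of_injective K.subtype_injective).trans hn⟩
  obtain ⟨s, hs, hsδ⟩ := hsplit δ
  exact ⟨P, inferInstance, P.not_dvd_index, s, hs, fun h hh => hsδ h (hδ h ⟨h, hh, rfl⟩)⟩

/-- Let `Δ` be a `G`-set in which every subgroup of `G` of prime power order fixes a
point.  Then every `Δ`-split surjection of `G`-modules (one admitting a
`G_δ`-equivariant section for each `δ ∈ Δ`) splits `K`-equivariantly for every finite
subgroup `K` of `G`. -/
theorem stmt19 (G : Type*) [Group G] (Δ : Type*) [MulAction G Δ]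
    (hΔ : ∀ H : Subgroup G, (∃ (p k : ℕ), p.Prime ∧ Nat.card H = p ^ k) →
      ∃ δ : Δ, ∀ g ∈ H, g • δ = δ)
    (A B : Type*) [AddCommGroup A] [AddCommGroup B]
    [DistribMulAction G A] [DistribMulAction G B]
    (π : A →+ B) (hπ : Function.Surjective π)
    (hequiv : ∀ (g : G) (x : A), π (g • x) = g • π x)
    (hsplit : ∀ δ : Δ, ∃ s : B →+ A, (∀ b, π (s b) = b) ∧
      ∀ g ∈ MulAction.stabilizer G δ, ∀ b, s (g • b) = g • s b)
    (K : Subgroup G) [Finite K] :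
    ∃ s : B →+ A, (∀ b, π (s b) = b) ∧ ∀ g ∈ K, ∀ b, s (g • b) = g • s b :=
  stmt19_general G Δ hΔ A B π hequiv hsplit K
end
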